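/- arXiv:2005.10230 — 2 statements merged into one kernel-verified Lean document; each statement's English description precedes it below -/
import Mathlib

section
/- Let φ₁, φ₂ : ℝᵖ → ℝ ∪ {∞} be proper, lsc, convex, γ > 0, s ∈ ℝᵖ, u = prox_{γφ₁}(s), v = prox_{γφ₂}(2u−s). Define the Douglas–Rachford envelope φ^γ_DR(s) = φ₁(u) + φ₂(v) + (1/γ)⟨s−u, v−u⟩ + (1/(2γ))‖v−u‖². With γ* = 1/γ, s* = −s/γ, and φ^{γ*}_{DR*} the DRE of the dual problem ψ = (φ₁(−·))* + φ₂* with stepsize γ*, it holds that φ^{γ*}_{DR*}(s*) = −φ^γ_DR(s). -/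
open scoped RealInnerProductSpace
open Filter Topology

/-- The convex (Fenchel) conjugate of an extended-real-valued function. -/
noncomputable def eConj {n : ℕ} (h : EuclideanSpace ℝ (Fin n) → EReal)
    (y : EuclideanSpace ℝ (Fin n)) : EReal :=
  ⨆ x, ((⟪y, x⟫ : ℝ) : EReal) - h x

/-- `h` is proper: nowhere `⊥` and not identically `⊤`. -/
def ProperFn {n : ℕ} (h : EuclideanSpace ℝ (Fin n) → EReal) : Prop :=
  (∃ x, h x ≠ ⊤) ∧ ∀ x, h x ≠ ⊥

/-- Convexity for extended-real-valued functions. -/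
def EConvexOn {n : ℕ} (h : EuclideanSpace ℝ (Fin n) → EReal) : Prop :=
  ∀ x y : EuclideanSpace ℝ (Fin n), ∀ a b : ℝ, 0 ≤ a → 0 ≤ b → a + b = 1 →
    h (a • x + b • y) ≤ (a : EReal) * h x + (b : EReal) * h y

/-- `u ∈ prox_{γ h}(x)` for an extended-real-valued `h`. -/
def IsProx {n : ℕ} (h : EuclideanSpace ℝ (Fin n) → EReal) (γ : ℝ)
    (x u : EuclideanSpace ℝ (Fin n)) : Prop :=
  ∀ w, h u + ((‖u - x‖ ^ 2 / (2 * γ) : ℝ) : EReal) ≤ h w + ((‖w - x‖ ^ 2 / (2 * γ) : ℝ) : EReal)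

/-- `u = prox_{γ h}(x)` for a real-valued `h`. -/
def IsProxR {n : ℕ} (h : EuclideanSpace ℝ (Fin n) → ℝ) (γ : ℝ)
    (x u : EuclideanSpace ℝ (Fin n)) : Prop :=
  ∀ w, h u + ‖u - x‖ ^ 2 / (2 * γ) ≤ h w + ‖w - x‖ ^ 2 / (2 * γ)

/-- The Moreau envelope `h^γ`. -/
noncomputable def moreauEnv {n : ℕ} (h : EuclideanSpace ℝ (Fin n) → EReal) (γ : ℝ)
    (x : EuclideanSpace ℝ (Fin n)) : EReal :=
  ⨅ w, h w + ((‖w - x‖ ^ 2 / (2 * γ) : ℝ) : EReal)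

/-- The Douglas–Rachford envelope value at `s`, given the prox points `u, v`. -/
noncomputable def dre {n : ℕ} (φ₁ φ₂ : EuclideanSpace ℝ (Fin n) → EReal) (γ : ℝ)
    (s u v : EuclideanSpace ℝ (Fin n)) : EReal :=
  φ₁ u + φ₂ v + (((1 / γ) * ⟪s - u, v - u⟫ + ‖v - u‖ ^ 2 / (2 * γ) : ℝ) : EReal)

/-- `v` belongs to the regular (Fréchet) subdifferential of `h` at `x̄`. -/
def RegSubdiffAt {n : ℕ} (h : EuclideanSpace ℝ (Fin n) → EReal)
    (xbar v : EuclideanSpace ℝ (Fin n)) : Prop :=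
  ∀ ε : ℝ, 0 < ε → ∀ᶠ x in nhds xbar,
    h xbar + ((⟪v, x - xbar⟫ - ε * ‖x - xbar‖ : ℝ) : EReal) ≤ h x

/-- `μ`-strong convexity for extended-real-valued functions. -/
def EStrongConvexOn {n : ℕ} (μ : ℝ) (h : EuclideanSpace ℝ (Fin n) → EReal) : Prop :=
  EConvexOn (fun x => h x - ((μ / 2 * ‖x‖ ^ 2 : ℝ) : EReal))

/-!
The prox optimality conditions say that `γ⁻¹ • (s - u)` is a subgradient of `φ₁` at `u` and
`γ⁻¹ • (2 • u - s - v)` one of `φ₂` at `v`. A subgradient `z` of `h` at `p` makes the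
Fenchel–Young inequality an equality, `h* z = ⟪z, p⟫ - h p`, and is the proximal point of `γ h*`
at `z + γ • p`; this point is unique because `h*` is convex. Hence the dual proximal points are
`u* = γ⁻¹ • (u - s)` and `v* = γ⁻¹ • (2 • u - s - v)`, the dual function values there are
explicit in the primal ones, and the claim reduces to an algebraic identity in `s, u, v`.
-/

theorem le_of_forall_le_add_mul {a b c : ℝ} (h : ∀ t : ℝ, 0 < t → t ≤ 1 → a ≤ b + t * c) :
    a ≤ b := by
  have hlim : Tendsto (fun t : ℝ => b + t * c) (𝓝[>] 0) (𝓝 b) :=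
    (Continuous.tendsto' (by fun_prop) 0 b (by simp)).mono_left nhdsWithin_le_nhds
  refine ge_of_tendsto hlim ?_
  filter_upwards [Ioc_mem_nhdsGT one_pos] with t ht using h t ht.1 ht.2

section ConvexConjugate

variable {n : ℕ} {h : EuclideanSpace ℝ (Fin n) → EReal} {γ a : ℝ}
  {x p z u : EuclideanSpace ℝ (Fin n)}

def HasSubgradientAt (h : EuclideanSpace ℝ (Fin n) → EReal) (z p : EuclideanSpace ℝ (Fin n)) :
    Prop :=
  ∀ w, h p + ((⟪z, w - p⟫ : ℝ) : EReal) ≤ h w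

theorem ProperFn.comp_neg (hp : ProperFn h) : ProperFn (fun x => h (-x)) :=
  ⟨let ⟨x₀, hx₀⟩ := hp.1; ⟨-x₀, by simpa using hx₀⟩, fun x => hp.2 (-x)⟩

theorem HasSubgradientAt.comp_neg (hz : HasSubgradientAt h z p) :
    HasSubgradientAt (fun x => h (-x)) (-z) (-p) := by
  intro w
  have hinner : ⟪-z, w - -p⟫ = ⟪z, -w - p⟫ := by
    rw [← inner_neg_neg, neg_neg]
    congr 1
    abel
  simpa only [neg_neg, hinner] using hz (-w)

theorem IsProx.exists_eq_coe (hp : ProperFn h) (hu : IsProx h γ x u) : ∃ a : ℝ, h u = a := by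
  obtain ⟨x₀, hx₀⟩ := hp.1
  refine ⟨(h u).toReal, (EReal.coe_toReal (fun htop => ?_) (hp.2 u)).symm⟩
  have h₀ := hu x₀
  rw [htop, EReal.top_add_of_ne_bot (EReal.coe_ne_bot _), top_le_iff] at h₀
  exact EReal.add_ne_top hx₀ (EReal.coe_ne_top _) h₀

theorem IsProx.hasSubgradientAt (hp : ProperFn h) (hc : EConvexOn h)
    (hu : IsProx h γ x u) : HasSubgradientAt h (γ⁻¹ • (x - u)) u := by
  obtain ⟨a, ha⟩ := hu.exists_eq_coe hp
  intro w
  rcases eq_or_ne (h w) ⊤ with hw | hw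
  · simp [hw]
  obtain ⟨b, hb⟩ : ∃ b : ℝ, h w = b := ⟨_, (EReal.coe_toReal hw (hp.2 w)).symm⟩
  rw [ha, hb, ← EReal.coe_add, EReal.coe_le_coe_iff, real_inner_smul_left]
  -- compare `u` with the points `u + t • (w - u)` of the segment and let `t → 0`
  refine le_of_forall_le_add_mul (c := ‖w - u‖ ^ 2 / (2 * γ)) fun t ht ht1 => ?_
  have hconv : h (u + t • (w - u)) ≤ ((1 - t) * a + t * b : ℝ) := by
    have := hc u w (1 - t) t (by linarith) ht.le (by ring)
    rwa [ha, hb, show (1 - t) • u + t • w = u + t • (w - u) by module] at this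
  have hprox : a + ‖u - x‖ ^ 2 / (2 * γ)
      ≤ (1 - t) * a + t * b + ‖u + t • (w - u) - x‖ ^ 2 / (2 * γ) := by
    have := hu (u + t • (w - u))
    rw [ha] at this
    exact_mod_cast this.trans (add_le_add_left hconv _)
  have hnorm : ‖u + t • (w - u) - x‖ ^ 2
      = ‖u - x‖ ^ 2 - 2 * t * ⟪x - u, w - u⟫ + t ^ 2 * ‖w - u‖ ^ 2 := by
    rw [show u + t • (w - u) - x = (u - x) + t • (w - u) by abel, norm_add_sq_real,
      real_inner_smul_right, norm_smul, mul_pow, Real.norm_eq_abs, sq_abs, ← neg_sub x u,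
      inner_neg_left, norm_neg]
    ring
  rw [hnorm] at hprox
  refine le_of_mul_le_mul_left ?_ ht
  linear_combination hprox

theorem le_eConj (ha : h p = a) (z : EuclideanSpace ℝ (Fin n)) :
    ((⟪z, p⟫ - a : ℝ) : EReal) ≤ eConj h z := by
  have := le_iSup (fun x => ((⟪z, x⟫ : ℝ) : EReal) - h x) p
  rwa [ha, ← EReal.coe_sub] at this

theorem eConj_ne_bot (hp : ProperFn h) (z : EuclideanSpace ℝ (Fin n)) : eConj h z ≠ ⊥ := by
  obtain ⟨x₀, hx₀⟩ := hp.1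
  exact ne_bot_of_le_ne_bot (EReal.coe_ne_bot _)
    (le_eConj (EReal.coe_toReal hx₀ (hp.2 x₀)).symm z)

theorem eConvexOn_eConj (hbot : ∀ x, h x ≠ ⊥) : EConvexOn (eConj h) := by
  intro x y a b ha hb hab
  refine iSup_le fun w => ?_
  rcases eq_or_ne (h w) ⊤ with hw | hw
  · simp [hw]
  obtain ⟨r, hr⟩ : ∃ r : ℝ, h w = r := ⟨_, (EReal.coe_toReal hw (hbot w)).symm⟩
  have hsplit : ((⟪a • x + b • y, w⟫ : ℝ) : EReal) - h w
      = (a : EReal) * ((⟪x, w⟫ - r : ℝ) : EReal) + (b : EReal) * ((⟪y, w⟫ - r : ℝ) : EReal) := by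
    rw [hr, ← EReal.coe_sub, ← EReal.coe_mul, ← EReal.coe_mul, ← EReal.coe_add,
      EReal.coe_eq_coe_iff, inner_add_left, real_inner_smul_left, real_inner_smul_left]
    linear_combination r * hab
  rw [hsplit]
  gcongr <;> exact le_eConj hr _

theorem HasSubgradientAt.eConj_eq (hz : HasSubgradientAt h z p) (ha : h p = a) :
    eConj h z = ((⟪z, p⟫ - a : ℝ) : EReal) := by
  refine le_antisymm (iSup_le fun w => ?_) (le_eConj ha z)
  have hw := hz w
  rw [ha, ← EReal.coe_add] at hw
  calc ((⟪z, w⟫ : ℝ) : EReal) - h w ≤ ((⟪z, w⟫ : ℝ) : EReal) - ((a + ⟪z, w - p⟫ : ℝ) : EReal) :=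
        EReal.sub_le_sub le_rfl hw
    _ = ((⟪z, p⟫ - a : ℝ) : EReal) := by
        rw [← EReal.coe_sub, inner_sub_right]
        congr 1
        ring

theorem HasSubgradientAt.isProx_eConj (hz : HasSubgradientAt h z p) (ha : h p = a)
    (hγ : 0 < γ) : IsProx (eConj h) γ (z + γ • p) z := by
  intro w
  rw [hz.eConj_eq ha, ← EReal.coe_add]
  calc ((⟪z, p⟫ - a + ‖z - (z + γ • p)‖ ^ 2 / (2 * γ) : ℝ) : EReal)
      ≤ ((⟪w, p⟫ - a + ‖w - (z + γ • p)‖ ^ 2 / (2 * γ) : ℝ) : EReal) := by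
        have hsq : ‖w - (z + γ • p)‖ ^ 2 / (2 * γ)
            = ‖w - z‖ ^ 2 / (2 * γ) - ⟪w - z, p⟫ + ‖z - (z + γ • p)‖ ^ 2 / (2 * γ) := by
          rw [show w - (z + γ • p) = (w - z) - γ • p by abel, sub_add_cancel_left, norm_neg,
            norm_sub_sq_real, real_inner_smul_right]
          field_simp
        have : 0 ≤ ‖w - z‖ ^ 2 / (2 * γ) := by positivity
        rw [EReal.coe_le_coe_iff, hsq, inner_sub_left]
        linarith
    _ ≤ eConj h w + ((‖w - (z + γ • p)‖ ^ 2 / (2 * γ) : ℝ) : EReal) := by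
        rw [EReal.coe_add]
        gcongr
        exact le_eConj ha w

theorem IsProx.unique (hp : ProperFn h) (hc : EConvexOn h) (hγ : 0 < γ)
    {u₁ u₂ : EuclideanSpace ℝ (Fin n)} (hu₁ : IsProx h γ x u₁) (hu₂ : IsProx h γ x u₂) :
    u₁ = u₂ := by
  obtain ⟨a₁, ha₁⟩ := hu₁.exists_eq_coe hp
  obtain ⟨a₂, ha₂⟩ := hu₂.exists_eq_coe hp
  have h₁ := hu₁.hasSubgradientAt hp hc u₂
  have h₂ := hu₂.hasSubgradientAt hp hc u₁
  rw [ha₁, ha₂] at h₁ h₂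
  norm_cast at h₁ h₂
  rw [real_inner_smul_left] at h₁ h₂
  have hsum : ⟪x - u₁, u₂ - u₁⟫ + ⟪x - u₂, u₁ - u₂⟫ = ‖u₁ - u₂‖ ^ 2 := by
    rw [← neg_sub u₁ u₂, inner_neg_right, neg_add_eq_sub, ← inner_sub_left,
      sub_sub_sub_cancel_left, real_inner_self_eq_norm_sq]
  have hnonpos : γ⁻¹ * ‖u₁ - u₂‖ ^ 2 ≤ 0 := by linear_combination h₁ + h₂ - γ⁻¹ * hsum
  have := le_antisymm (nonpos_of_mul_nonpos_right hnonpos (inv_pos.2 hγ)) (sq_nonneg _)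
  rwa [sq_eq_zero_iff, norm_eq_zero, sub_eq_zero] at this

theorem HasSubgradientAt.eq_of_isProx_eConj (hp : ProperFn h) (hz : HasSubgradientAt h z p)
    (ha : h p = a) (hγ : 0 < γ) {q : EuclideanSpace ℝ (Fin n)}
    (hq : IsProx (eConj h) γ (z + γ • p) q) : q = z :=
  hq.unique ⟨⟨z, by rw [hz.eConj_eq ha]; exact EReal.coe_ne_top _⟩, eConj_ne_bot hp⟩
    (eConvexOn_eConj hp.2) hγ (hz.isProx_eConj ha hγ)

theorem dre_eq_neg_dre_of_fenchel_young {φ₁ φ₂ ψ₁ ψ₂ : EuclideanSpace ℝ (Fin n) → EReal}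
    (hγ : γ ≠ 0) {a b : ℝ} {s u v : EuclideanSpace ℝ (Fin n)}
    (hφ₁ : φ₁ u = a) (hφ₂ : φ₂ v = b)
    (hψ₁ : ψ₁ (γ⁻¹ • (u - s)) = ((⟪γ⁻¹ • (u - s), -u⟫ - a : ℝ) : EReal))
    (hψ₂ : ψ₂ (γ⁻¹ • ((2 : ℝ) • u - s - v))
      = ((⟪γ⁻¹ • ((2 : ℝ) • u - s - v), v⟫ - b : ℝ) : EReal)) :
    dre ψ₁ ψ₂ (1 / γ) (-(γ⁻¹ • s)) (γ⁻¹ • (u - s)) (γ⁻¹ • ((2 : ℝ) • u - s - v)) =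
      -dre φ₁ φ₂ γ s u v := by
  simp only [dre, hψ₁, hψ₂, hφ₁, hφ₂, ← EReal.coe_add, ← EReal.coe_neg, EReal.coe_eq_coe_iff]
  rw [show -(γ⁻¹ • s) - γ⁻¹ • (u - s) = γ⁻¹ • -u by module,
    show γ⁻¹ • ((2 : ℝ) • u - s - v) - γ⁻¹ • (u - s) = γ⁻¹ • (u - v) by module,
    norm_smul, mul_pow, Real.norm_eq_abs, sq_abs, norm_sub_rev v u,
    ← real_inner_self_eq_norm_sq]
  simp only [real_inner_smul_left, real_inner_smul_right, inner_sub_left, inner_sub_right,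
    inner_neg_left, inner_neg_right, real_inner_comm u s, real_inner_comm v s,
    real_inner_comm v u]
  field_simp
  ring

end ConvexConjugate

theorem dre_self_dual_general {n : ℕ} (φ₁ φ₂ : EuclideanSpace ℝ (Fin n) → EReal)
    (h1p : ProperFn φ₁) (h1c : EConvexOn φ₁)
    (h2p : ProperFn φ₂) (h2c : EConvexOn φ₂)
    (γ : ℝ) (hγ : 0 < γ) (s u v ustar vstar : EuclideanSpace ℝ (Fin n))
    (hu : IsProx φ₁ γ s u) (hv : IsProx φ₂ γ ((2 : ℝ) • u - s) v)
    (hustar : IsProx (eConj (fun x => φ₁ (-x))) (1 / γ) (-(γ⁻¹ • s)) ustar)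
    (hvstar : IsProx (eConj φ₂) (1 / γ) ((2 : ℝ) • ustar - -(γ⁻¹ • s)) vstar) :
    dre (eConj (fun x => φ₁ (-x))) (eConj φ₂) (1 / γ) (-(γ⁻¹ • s)) ustar vstar =
      -dre φ₁ φ₂ γ s u v := by
  have hγ' : 0 < 1 / γ := by positivity
  obtain ⟨a, ha⟩ := hu.exists_eq_coe h1p
  obtain ⟨b, hb⟩ := hv.exists_eq_coe h2p
  have ha' : (fun x => φ₁ (-x)) (-u) = a := by simpa using ha
  have hz₁ := (hu.hasSubgradientAt h1p h1c).comp_neg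
  rw [← smul_neg, neg_sub] at hz₁
  have hz₂ := hv.hasSubgradientAt h2p h2c
  have hust : ustar = γ⁻¹ • (u - s) := hz₁.eq_of_isProx_eConj h1p.comp_neg ha' hγ' <| by
    rwa [show γ⁻¹ • (u - s) + (1 / γ) • -u = -(γ⁻¹ • s) by module]
  have hvst : vstar = γ⁻¹ • ((2 : ℝ) • u - s - v) := hz₂.eq_of_isProx_eConj h2p hb hγ' <| by
    rwa [show γ⁻¹ • ((2 : ℝ) • u - s - v) + (1 / γ) • v = (2 : ℝ) • ustar - -(γ⁻¹ • s) by
      rw [hust]; module]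
  rw [hust, hvst]
  exact dre_eq_neg_dre_of_fenchel_young hγ.ne' ha hb (hz₁.eConj_eq ha') (hz₂.eConj_eq hb)

/-- The dual DRE is the negative of the primal DRE: `φ^{γ*}_{DR*}(s*) = −φ^γ_DR(s)`
with `γ* = 1/γ`, `s* = −s/γ`. -/
theorem dre_self_dual {n : ℕ} (φ₁ φ₂ : EuclideanSpace ℝ (Fin n) → EReal)
    (h1p : ProperFn φ₁) (h1l : LowerSemicontinuous φ₁) (h1c : EConvexOn φ₁)
    (h2p : ProperFn φ₂) (h2l : LowerSemicontinuous φ₂) (h2c : EConvexOn φ₂)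
    (γ : ℝ) (hγ : 0 < γ) (s u v ustar vstar : EuclideanSpace ℝ (Fin n))
    (hu : IsProx φ₁ γ s u) (hv : IsProx φ₂ γ ((2 : ℝ) • u - s) v)
    (hustar : IsProx (eConj (fun x => φ₁ (-x))) (1 / γ) (-(γ⁻¹ • s)) ustar)
    (hvstar : IsProx (eConj φ₂) (1 / γ) ((2 : ℝ) • ustar - -(γ⁻¹ • s)) vstar) :
    dre (eConj (fun x => φ₁ (-x))) (eConj φ₂) (1 / γ) (-(γ⁻¹ • s)) ustar vstar =
      -dre φ₁ φ₂ γ s u v :=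
  dre_self_dual_general φ₁ φ₂ h1p h1c h2p h2c γ hγ s u v ustar vstar hu hv hustar hvstar
end

section
/- Let φ₁ : ℝᵖ → ℝ be differentiable with L-Lipschitz gradient, φ₂ proper lsc, 0 < γ < 1/L. Suppose a sequence sᵏ → s⋆, with uᵏ = prox_{γφ₁}(sᵏ), vᵏ ∈ prox_{γφ₂}(2uᵏ−sᵏ), uᵏ − vᵏ → 0, uᵏ → u⋆, vᵏ → u⋆, and u⋆ is a strong local minimum of φ = φ₁ + φ₂ with φ(u⋆) = φ⋆ = lim_k φ^γ_DR(sᵏ). Then there exists δ > 0 such that for all sufficiently large k, φ^γ_DR(sᵏ) − φ⋆ ≥ (δ/2)‖sᵏ − s⋆‖², where s⋆ = u⋆ + γ∇φ₁(u⋆). Explicitly one may take δ = μ(1−γL)/((1−γ(L−μ))(1+γL)²), where μ is the strong local minimality modulus. -/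
/-!
For large `k`, `vᵏ` lies in the neighbourhood where strong minimality holds. The prox optimality
condition `sᵏ = uᵏ + γ∇φ₁(uᵏ)` and the descent lemma for `φ₁` give the lower sandwich bound
`φ^γ_DR(sᵏ) ≥ φ(vᵏ) + ((1 - γL)/(2γ))‖vᵏ - uᵏ‖² ≥ φ⋆ + (μ/2)‖vᵏ - u⋆‖² + ((1 - γL)/(2γ))‖vᵏ - uᵏ‖²`.
Since `I + γ∇φ₁` is `(1 + γL)`-Lipschitz, `‖sᵏ - s⋆‖ ≤ (1 + γL)(‖vᵏ - uᵏ‖ + ‖vᵏ - u⋆‖)`, and the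
weighted Young inequality `αβ/(α+β) (a + b)² ≤ αa² + βb²` merges the two quadratic terms into
`(δ/2)‖sᵏ - s⋆‖²`.
-/

open scoped RealInnerProductSpace
open Filter Topology

section Gradient

variable {E : Type*} [NormedAddCommGroup E] [InnerProductSpace ℝ E] [CompleteSpace E]
  {φ : E → ℝ} {g : E}

theorem HasGradientAt.hasDerivAt_comp_add_smul {x d : E} {t : ℝ}
    (hφ : HasGradientAt φ g (x + t • d)) :
    HasDerivAt (fun t : ℝ => φ (x + t • d)) ⟪g, d⟫ t := by
  have hline : HasDerivAt (fun t : ℝ => x + t • d) d t := by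
    simpa using ((hasDerivAt_id t).smul_const d).const_add x
  simpa [Function.comp_def] using (hasGradientAt_iff_hasFDerivAt.mp hφ).comp_hasDerivAt t hline

theorem le_add_inner_add_of_lipschitz_gradient {f' : E → E} {L : ℝ}
    (hφ : ∀ x, HasGradientAt φ (f' x) x) (hlip : ∀ x y, ‖f' x - f' y‖ ≤ L * ‖x - y‖)
    (x y : E) : φ y ≤ φ x + ⟪f' x, y - x⟫ + L / 2 * ‖y - x‖ ^ 2 := by
  set d := y - x
  let h : ℝ → ℝ := fun t => t * ⟪f' x, d⟫ + t ^ 2 * (L / 2 * ‖d‖ ^ 2) - φ (x + t • d)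
  have hderiv : ∀ t : ℝ, HasDerivAt h
      (⟪f' x, d⟫ + 2 * t * (L / 2 * ‖d‖ ^ 2) - ⟪f' (x + t • d), d⟫) t := by
    intro t
    have hlin := (hasDerivAt_id t).mul_const ⟪f' x, d⟫
    have hquad := (hasDerivAt_pow 2 t).mul_const (L / 2 * ‖d‖ ^ 2)
    exact ((hlin.add hquad).sub (hφ (x + t • d)).hasDerivAt_comp_add_smul).congr_deriv
      (by simp)
  have hmono : MonotoneOn h (Set.Icc 0 1) := by
    refine monotoneOn_of_deriv_nonneg (convex_Icc 0 1)
      (fun t _ => (hderiv t).continuousAt.continuousWithinAt)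
      (fun t _ => (hderiv t).differentiableAt.differentiableWithinAt) fun t ht => ?_
    rw [interior_Icc] at ht
    rw [(hderiv t).deriv]
    have hcs := real_inner_le_norm (f' (x + t • d) - f' x) d
    have hlipt : ‖f' (x + t • d) - f' x‖ ≤ L * (t * ‖d‖) := by
      simpa [norm_smul, abs_of_pos ht.1] using hlip (x + t • d) x
    rw [inner_sub_left] at hcs
    nlinarith [norm_nonneg d]
  have h01 := hmono (Set.left_mem_Icc.mpr zero_le_one) (Set.right_mem_Icc.mpr zero_le_one)
    zero_le_one
  simp only [h, zero_mul, ne_eq, OfNat.ofNat_ne_zero, not_false_eq_true, zero_pow,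
    zero_smul, add_zero, one_mul, one_pow, one_smul, d, add_sub_cancel] at h01
  linarith

end Gradient

theorem IsProxR.sub_eq_smul {n : ℕ} {φ : EuclideanSpace ℝ (Fin n) → ℝ}
    {g s u : EuclideanSpace ℝ (Fin n)} {γ : ℝ} (hγ : γ ≠ 0) (hu : IsProxR φ γ s u)
    (hφ : HasGradientAt φ g u) : s - u = γ • g := by
  suffices hz : g + γ⁻¹ • (u - s) = 0 by
    rw [add_eq_zero_iff_eq_neg, ← neg_smul] at hz
    rw [hz, smul_smul, mul_neg, mul_inv_cancel₀ hγ, neg_one_smul, neg_sub]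
  refine ext_inner_left ℝ fun d => ?_
  have hderiv : HasDerivAt (fun t : ℝ => φ (u + t • d) + ‖u + t • d - s‖ ^ 2 / (2 * γ))
      (⟪g, d⟫ + 2 * ⟪u - s, d⟫ / (2 * γ)) 0 := by
    have hline : HasDerivAt (fun t : ℝ => u + t • d - s) d 0 := by
      simpa using (((hasDerivAt_id (0 : ℝ)).smul_const d).const_add u).sub_const s
    have hφ0 : HasGradientAt φ g (u + (0 : ℝ) • d) := by simpa using hφ
    exact (hφ0.hasDerivAt_comp_add_smul.add (hline.norm_sq.div_const (2 * γ))).congr_deriv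
      (by simp)
  have hmin : IsLocalMin (fun t : ℝ => φ (u + t • d) + ‖u + t • d - s‖ ^ 2 / (2 * γ)) 0 :=
    Filter.Eventually.of_forall fun t => by simpa using hu (u + t • d)
  have h0 := hmin.hasDerivAt_eq_zero hderiv
  rw [inner_add_right, inner_smul_right, inner_zero_right, real_inner_comm g,
    real_inner_comm (u - s)]
  field_simp at h0 ⊢
  linarith

theorem norm_add_smul_sub_add_smul_le {E : Type*} [SeminormedAddCommGroup E] [NormedSpace ℝ E]
    {f' : E → E} {L γ : ℝ} (hγ : 0 ≤ γ) (hlip : ∀ x y, ‖f' x - f' y‖ ≤ L * ‖x - y‖) (x y : E) :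
    ‖(x + γ • f' x) - (y + γ • f' y)‖ ≤ (1 + γ * L) * ‖x - y‖ := by
  calc ‖(x + γ • f' x) - (y + γ • f' y)‖ = ‖(x - y) + γ • (f' x - f' y)‖ := by
        rw [smul_sub]; abel_nf
    _ ≤ ‖x - y‖ + γ * (L * ‖x - y‖) := by
        refine (norm_add_le _ _).trans ?_
        rw [norm_smul, Real.norm_of_nonneg hγ]
        gcongr
        exact hlip x y
    _ = (1 + γ * L) * ‖x - y‖ := by ring

theorem mul_div_add_mul_sq_le {α β : ℝ} (hα : 0 < α) (hβ : 0 < β) (a b : ℝ) :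
    α * β / (α + β) * (a + b) ^ 2 ≤ α * a ^ 2 + β * b ^ 2 := by
  rw [div_mul_eq_mul_div, div_le_iff₀ (by positivity)]
  nlinarith [sq_nonneg (α * a - β * b)]

theorem growth_const_mul_sq_le {γ L μ S a b : ℝ} (hγ : 0 < γ) (hL : 0 ≤ L) (hγL : γ * L < 1)
    (hμ : 0 < μ) (hS₀ : 0 ≤ S) (hS : S ≤ (1 + γ * L) * (a + b)) :
    μ * (1 - γ * L) / ((1 - γ * (L - μ)) * (1 + γ * L) ^ 2) / 2 * S ^ 2
      ≤ μ / 2 * b ^ 2 + (1 - γ * L) / (2 * γ) * a ^ 2 := by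
  set δ := μ * (1 - γ * L) / ((1 - γ * (L - μ)) * (1 + γ * L) ^ 2)
  set α := (1 - γ * L) / (2 * γ)
  have hα : 0 < α := div_pos (by linarith) (by positivity)
  have hQ : 0 < 1 - γ * (L - μ) := by nlinarith
  have hδ : 0 ≤ δ :=
    div_nonneg (mul_nonneg hμ.le (by linarith)) (by nlinarith [sq_nonneg (1 + γ * L)])
  -- `δ (1 + γL)² / 2` is exactly the constant `αβ/(α+β)` of the weighted Young inequality
  have hconst : δ / 2 * (1 + γ * L) ^ 2 = α * (μ / 2) / (α + μ / 2) := by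
    have hT : 0 < 1 + γ * L := by positivity
    have hsum : α + μ / 2 = (1 - γ * (L - μ)) / (2 * γ) := by
      simp only [α]
      field_simp
      ring
    rw [hsum]
    simp only [δ, α]
    field_simp
  calc δ / 2 * S ^ 2 ≤ δ / 2 * ((1 + γ * L) * (a + b)) ^ 2 := by gcongr
    _ = α * (μ / 2) / (α + μ / 2) * (a + b) ^ 2 := by rw [← hconst]; ring
    _ ≤ _ := by linarith [mul_div_add_mul_sq_le hα (half_pos hμ) a b]

theorem le_dre_of_isProxR {n : ℕ} {φ₁ : EuclideanSpace ℝ (Fin n) → ℝ}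
    {f' : EuclideanSpace ℝ (Fin n) → EuclideanSpace ℝ (Fin n)} {L γ : ℝ}
    (hφ₁ : ∀ x, HasGradientAt φ₁ (f' x) x) (hlip : ∀ x y, ‖f' x - f' y‖ ≤ L * ‖x - y‖)
    (hγ : γ ≠ 0) {s u : EuclideanSpace ℝ (Fin n)} (hu : IsProxR φ₁ γ s u)
    (φ₂ : EuclideanSpace ℝ (Fin n) → EReal) (v : EuclideanSpace ℝ (Fin n)) :
    ((φ₁ v : ℝ) : EReal) + φ₂ v + (((1 - γ * L) / (2 * γ) * ‖v - u‖ ^ 2 : ℝ) : EReal)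
      ≤ dre (fun x => ((φ₁ x : ℝ) : EReal)) φ₂ γ s u v := by
  have hdesc := le_add_inner_add_of_lipschitz_gradient hφ₁ hlip u v
  have hreal : φ₁ v + (1 - γ * L) / (2 * γ) * ‖v - u‖ ^ 2
      ≤ φ₁ u + ((1 / γ) * ⟪s - u, v - u⟫ + ‖v - u‖ ^ 2 / (2 * γ)) := by
    rw [hu.sub_eq_smul hγ (hφ₁ u), real_inner_smul_left, one_div, inv_mul_cancel_left₀ hγ]
    have hsplit : (1 - γ * L) / (2 * γ) * ‖v - u‖ ^ 2
        = ‖v - u‖ ^ 2 / (2 * γ) - L / 2 * ‖v - u‖ ^ 2 := by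
      field_simp
    linarith
  rw [dre, add_comm (φ₁ v : EReal), add_comm (φ₁ u : EReal), add_assoc, add_assoc,
    ← EReal.coe_add, ← EReal.coe_add]
  exact add_le_add_right (EReal.coe_le_coe_iff.mpr hreal) _

theorem dre_quadratic_growth_general {n : ℕ} (φ₁ : EuclideanSpace ℝ (Fin n) → ℝ)
    (f' : EuclideanSpace ℝ (Fin n) → EuclideanSpace ℝ (Fin n)) (L μ : ℝ)
    (hL : 0 < L) (hμ : 0 < μ)
    (hdiff : ∀ x, HasGradientAt φ₁ (f' x) x)
    (hlip : ∀ x y, ‖f' x - f' y‖ ≤ L * ‖x - y‖)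
    (φ₂ : EuclideanSpace ℝ (Fin n) → EReal)
    (γ : ℝ) (hγ0 : 0 < γ) (hγ : γ < 1 / L)
    (s u v : ℕ → EuclideanSpace ℝ (Fin n)) (ustar : EuclideanSpace ℝ (Fin n))
    (hu : ∀ k, IsProxR φ₁ γ (s k) (u k))
    (hvconv : Tendsto v atTop (nhds ustar))
    (φstar : ℝ)
    -- `u⋆` is a strong local minimum of `φ = φ₁ + φ₂` with modulus `μ` and `φ(u⋆) = φ⋆`
    (hstrmin : ∀ᶠ x in nhds ustar,
      (φstar : EReal) + ((μ / 2 * ‖x - ustar‖ ^ 2 : ℝ) : EReal) ≤ ((φ₁ x : ℝ) : EReal) + φ₂ x) :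
    ∃ N : ℕ, ∀ k ≥ N,
      ((μ * (1 - γ * L) / ((1 - γ * (L - μ)) * (1 + γ * L) ^ 2) / 2
          * ‖s k - (ustar + γ • f' ustar)‖ ^ 2 : ℝ) : EReal)
        ≤ dre (fun x => ((φ₁ x : ℝ) : EReal)) φ₂ γ (s k) (u k) (v k) - (φstar : EReal) := by
  have hγL : γ * L < 1 := by rwa [lt_div_iff₀ hL] at hγ
  obtain ⟨N, hN⟩ := eventually_atTop.mp (hvconv.eventually hstrmin)
  refine ⟨N, fun k hk => ?_⟩
  have hs : s k = u k + γ • f' (u k) := by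
    rw [← (hu k).sub_eq_smul hγ0.ne' (hdiff _), add_sub_cancel]
  have hS : ‖s k - (ustar + γ • f' ustar)‖ ≤ (1 + γ * L) * (‖v k - u k‖ + ‖v k - ustar‖) := by
    rw [hs, norm_sub_rev (v k)]
    refine (norm_add_smul_sub_add_smul_le hγ0.le hlip _ _).trans ?_
    gcongr
    exact norm_sub_le_norm_sub_add_norm_sub _ _ _
  have hreal := growth_const_mul_sq_le hγ0 hL.le hγL hμ (norm_nonneg _) hS
  rw [EReal.le_sub_iff_add_le (.inl (EReal.coe_ne_bot _)) (.inl (EReal.coe_ne_top _))]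
  calc _ ≤ (φstar : EReal) + ((μ / 2 * ‖v k - ustar‖ ^ 2 : ℝ) : EReal)
          + (((1 - γ * L) / (2 * γ) * ‖v k - u k‖ ^ 2 : ℝ) : EReal) := by
        norm_cast
        linarith
    _ ≤ ((φ₁ (v k) : ℝ) : EReal) + φ₂ (v k)
          + (((1 - γ * L) / (2 * γ) * ‖v k - u k‖ ^ 2 : ℝ) : EReal) :=
        add_le_add_left (hN k hk) _
    _ ≤ _ := le_dre_of_isProxR hdiff hlip hγ0.ne' (hu k) φ₂ (v k)

/-- Quadratic growth of the DRE near a strong local minimum along the iterates: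
`φ^γ_DR(sᵏ) − φ⋆ ≥ (δ/2)‖sᵏ − s⋆‖²` eventually, with
`δ = μ(1−γL)/((1−γ(L−μ))(1+γL)²)` and `s⋆ = u⋆ + γ∇φ₁(u⋆)`. -/
theorem dre_quadratic_growth {n : ℕ} (φ₁ : EuclideanSpace ℝ (Fin n) → ℝ)
    (f' : EuclideanSpace ℝ (Fin n) → EuclideanSpace ℝ (Fin n)) (L μ : ℝ)
    (hL : 0 < L) (hμ : 0 < μ)
    (hdiff : ∀ x, HasGradientAt φ₁ (f' x) x)
    (hlip : ∀ x y, ‖f' x - f' y‖ ≤ L * ‖x - y‖)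
    (φ₂ : EuclideanSpace ℝ (Fin n) → EReal)
    (h2p : ProperFn φ₂) (h2l : LowerSemicontinuous φ₂)
    (γ : ℝ) (hγ0 : 0 < γ) (hγ : γ < 1 / L)
    (s u v : ℕ → EuclideanSpace ℝ (Fin n)) (ustar : EuclideanSpace ℝ (Fin n))
    (hu : ∀ k, IsProxR φ₁ γ (s k) (u k))
    (hv : ∀ k, IsProx φ₂ γ ((2 : ℝ) • u k - s k) (v k))
    (hres : Tendsto (fun k => u k - v k) atTop (nhds 0))
    (huconv : Tendsto u atTop (nhds ustar))
    (hvconv : Tendsto v atTop (nhds ustar))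
    (hsconv : Tendsto s atTop (nhds (ustar + γ • f' ustar)))
    (φstar : ℝ)
    -- `u⋆` is a strong local minimum of `φ = φ₁ + φ₂` with modulus `μ` and `φ(u⋆) = φ⋆`
    (hstrmin : ∀ᶠ x in nhds ustar,
      (φstar : EReal) + ((μ / 2 * ‖x - ustar‖ ^ 2 : ℝ) : EReal) ≤ ((φ₁ x : ℝ) : EReal) + φ₂ x)
    (hval : ((φ₁ ustar : ℝ) : EReal) + φ₂ ustar = (φstar : EReal))
    -- `φ⋆ = lim_k φ^γ_DR(sᵏ)`
    (hlim : Tendsto (fun k => dre (fun x => ((φ₁ x : ℝ) : EReal)) φ₂ γ (s k) (u k) (v k))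
      atTop (nhds (φstar : EReal))) :
    ∃ N : ℕ, ∀ k ≥ N,
      ((μ * (1 - γ * L) / ((1 - γ * (L - μ)) * (1 + γ * L) ^ 2) / 2
          * ‖s k - (ustar + γ • f' ustar)‖ ^ 2 : ℝ) : EReal)
        ≤ dre (fun x => ((φ₁ x : ℝ) : EReal)) φ₂ γ (s k) (u k) (v k) - (φstar : EReal) :=
  dre_quadratic_growth_general φ₁ f' L μ hL hμ hdiff hlip φ₂ γ hγ0 hγ s u v ustar hu hvconv φstar
    hstrmin
end
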